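/- arXiv:1504.07845 — 3 statements merged into one kernel-verified Lean document; each statement's English description precedes it below -/
import Mathlib

section
/- Let F be an algebraically closed field. Every F-linear subspace L of Sym(3, F) all of whose elements are singular matrices satisfies dim_F L ≤ 3. Equivalently, the maximal linear subspaces contained in the secant variety of the quadric Veronese surface in PG(5, F) are planes. -/
/-!
A subspace `L` of dimension at least 4 in the 6-dimensional space of symmetric `3 × 3` matrices
meets the 3-dimensional space of diagonal matrices, so after permuting coordinates it contains a
singular diagonal matrix `D = diag(a, b, 0)` with `a ≠ 0`. Every `B ∈ L` then satisfies
`det (B + t • D) = 0` for all `t`, and the coefficients of this polynomial in `t` are quadratic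
constraints on the entries of `B`.

If `b ≠ 0`, they force `B₂₂ = 0` and `a B₁₂² + b B₀₂² = 0`, and together with `det B = 0` this
kills every element of `L` with `B₀₀ = B₀₂` and `B₀₁ = B₁₁ = 0`; but such a nonzero element exists
by counting dimensions. If `b = 0`, every lower right `2 × 2` block of an element of `L` is
singular, so by the `2 × 2` case of the theorem these blocks span at most a line. Hence `L`
contains all matrices supported on the first row and column, and adding a suitable one of them to
a nonzero element of `L` with vanishing first row yields an invertible matrix.
-/

open Module Matrix

namespace Submodule

variable {K V W : Type*} [Field K] [AddCommGroup V] [Module K V] [AddCommGroup W] [Module K W]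

theorem finrank_inf_ker_add_finrank_map (L : Submodule K V) [FiniteDimensional K L]
    (f : V →ₗ[K] W) : finrank K ↥(L ⊓ LinearMap.ker f) + finrank K (L.map f) = finrank K L := by
  rw [← f.range_domRestrict, ← map_comap_subtype, finrank_map_subtype_eq,
    ← LinearMap.ker_domRestrict, add_comm]
  exact (f.domRestrict L).finrank_range_add_finrank_ker

theorem exists_mem_ne_zero_forall_apply_eq_zero (L : Submodule K V) [FiniteDimensional K L]
    {n : ℕ} (φ : Fin n → Module.Dual K V) (h : n < finrank K L) :
    ∃ x ∈ L, x ≠ 0 ∧ ∀ i, φ i x = 0 := by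
  have hmap : finrank K (L.map (LinearMap.pi φ)) ≤ n :=
    (finrank_le _).trans_eq (finrank_fin_fun K)
  have hker : L ⊓ LinearMap.ker (LinearMap.pi φ) ≠ ⊥ := by
    intro hbot
    have := L.finrank_inf_ker_add_finrank_map (LinearMap.pi φ)
    rw [hbot, finrank_bot] at this
    omega
  obtain ⟨x, ⟨hxL, hx⟩, hx0⟩ := exists_mem_ne_zero_of_ne_bot hker
  exact ⟨x, hxL, hx0, fun i => congr_fun hx i⟩

end Submodule

@[simps]
def Matrix.submatrixLinearMap (R : Type*) {α l m n o : Type*} [Semiring R] [AddCommMonoid α]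
    [Module R α] (r : l → m) (c : o → n) : Matrix m n α →ₗ[R] Matrix l o α where
  toFun A := A.submatrix r c
  map_add' _ _ := rfl
  map_smul' _ _ := rfl

section

variable {F : Type*} [Field F]

theorem eq_zero_of_forall_mul_add_mul_sq_eq_zero [Infinite F] {c₁ c₂ : F}
    (h : ∀ t : F, c₁ * t + c₂ * t ^ 2 = 0) : c₁ = 0 ∧ c₂ = 0 := by
  classical
  obtain ⟨t, ht⟩ := Infinite.exists_notMem_finset ({0, 1} : Finset F)
  simp only [Finset.mem_insert, Finset.mem_singleton, not_or] at ht
  have h₂ : c₂ * (t * (t - 1)) = 0 := by linear_combination h t - t * h 1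
  have hc₂ : c₂ = 0 := by simpa [ht.1, sub_eq_zero, ht.2] using h₂
  exact ⟨by simpa [hc₂] using h 1, hc₂⟩

theorem finrank_le_one_of_isSymm_of_det_eq_zero (L : Submodule F (Matrix (Fin 2) (Fin 2) F))
    (hsymm : ∀ A ∈ L, A.IsSymm) (hsing : ∀ A ∈ L, A.det = 0) : finrank F L ≤ 1 := by
  have hoff : ∀ B ∈ L, B 0 0 * B 1 1 = 0 → B 0 1 = 0 := fun B hB h => by
    have := hsing B hB
    rw [det_fin_two, h, (hsymm B hB).apply 0 1] at this
    simpa using this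
  by_contra! h
  obtain ⟨B, hBL, hB0, hB⟩ := L.exists_mem_ne_zero_forall_apply_eq_zero ![entryLinearMap F F 0 0] h
  obtain ⟨C, hCL, hC0, hC⟩ := L.exists_mem_ne_zero_forall_apply_eq_zero ![entryLinearMap F F 1 1] h
  have hB00 : B 0 0 = 0 := hB 0
  have hC11 : C 1 1 = 0 := hC 0
  have hB01 := hoff B hBL (by rw [hB00, zero_mul])
  have hC01 := hoff C hCL (by rw [hC11, mul_zero])
  have hB11 : B 1 1 ≠ 0 := fun h11 => hB0 <| by
    ext i j; fin_cases i <;> fin_cases j <;> simp [hB00, hB01, h11, (hsymm B hBL).apply 0 1]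
  have hC00 : C 0 0 ≠ 0 := fun h00 => hC0 <| by
    ext i j; fin_cases i <;> fin_cases j <;> simp [hC11, hC01, h00, (hsymm C hCL).apply 0 1]
  refine mul_ne_zero hC00 hB11 ?_
  have := hsing _ (L.add_mem hBL hCL)
  simpa [det_fin_two, hB00, hC11, hB01, hC01, (hsymm B hBL).apply 0 1, (hsymm C hCL).apply 0 1]
    using this

theorem det_add_smul_diagonal (B : Matrix (Fin 3) (Fin 3) F) (a b t : F) :
    det (B + t • diagonal ![a, b, 0]) = det B
      + t * (a * (B 1 1 * B 2 2 - B 1 2 * B 2 1) + b * (B 0 0 * B 2 2 - B 0 2 * B 2 0))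
      + t ^ 2 * (a * b * B 2 2) := by
  simp only [det_fin_three, diagonal, smul_of, Matrix.add_apply, of_apply, Pi.smul_apply,
    smul_eq_mul, cons_val_zero, cons_val_one, cons_val, Fin.reduceEq, ↓reduceIte]
  ring

variable {L : Submodule F (Matrix (Fin 3) (Fin 3) F)}

theorem exists_diagonal_mem (hsymm : ∀ A ∈ L, A.IsSymm) (h : 3 < finrank F L) :
    ∃ d : Fin 3 → F, d ≠ 0 ∧ diagonal d ∈ L := by
  obtain ⟨B, hBL, hB0, hB⟩ := L.exists_mem_ne_zero_forall_apply_eq_zero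
    ![entryLinearMap F F 0 1, entryLinearMap F F 0 2, entryLinearMap F F 1 2] h
  have hB01 : B 0 1 = 0 := hB 0
  have hB02 : B 0 2 = 0 := hB 1
  have hB12 : B 1 2 = 0 := hB 2
  have hs := (hsymm B hBL).apply
  have hBd : diagonal B.diag = B := by
    ext i j; fin_cases i <;> fin_cases j <;> simp [hB01, hB02, hB12, hs 0 1, hs 0 2, hs 1 2]
  exact ⟨B.diag, fun h0 => hB0 (by rw [← hBd, h0]; simp), by rwa [hBd]⟩

theorem exists_perm_apply_ne_zero_apply_eq_zero {α : Type*} [Zero α] {d : Fin 3 → α}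
    (hd : d ≠ 0) {k : Fin 3} (hk : d k = 0) :
    ∃ σ : Equiv.Perm (Fin 3), d (σ 0) ≠ 0 ∧ d (σ 2) = 0 := by
  obtain ⟨i, hi⟩ := Function.ne_iff.mp hd
  have hperm : ∀ i k : Fin 3, i ≠ k → ∃ σ : Equiv.Perm (Fin 3), σ 0 = i ∧ σ 2 = k := by decide
  obtain ⟨σ, rfl, rfl⟩ := hperm i k (fun hik => hi (hik ▸ hk))
  exact ⟨σ, hi, hk⟩

theorem det_add_smul_diagonal_coeffs_eq_zero [Infinite F] (hsymm : ∀ A ∈ L, A.IsSymm)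
    (hsing : ∀ A ∈ L, A.det = 0) {a b : F} (hD : diagonal ![a, b, 0] ∈ L) {B} (hB : B ∈ L) :
    a * (B 1 1 * B 2 2 - B 1 2 ^ 2) + b * (B 0 0 * B 2 2 - B 0 2 ^ 2) = 0 ∧
      a * b * B 2 2 = 0 := by
  refine eq_zero_of_forall_mul_add_mul_sq_eq_zero fun t => ?_
  have := hsing _ (L.add_mem hB (L.smul_mem t hD))
  rw [det_add_smul_diagonal, hsing B hB, (hsymm B hB).apply 1 2, (hsymm B hB).apply 0 2] at this
  linear_combination this

theorem finrank_le_three_of_diagonal_mem_of_ne_zero [Infinite F] (hsymm : ∀ A ∈ L, A.IsSymm)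
    (hsing : ∀ A ∈ L, A.det = 0) {a b : F} (ha : a ≠ 0) (hb : b ≠ 0)
    (hD : diagonal ![a, b, 0] ∈ L) : finrank F L ≤ 3 := by
  by_contra! h
  obtain ⟨B, hBL, hB0, hB⟩ := L.exists_mem_ne_zero_forall_apply_eq_zero
    ![entryLinearMap F F 0 0 - entryLinearMap F F 0 2, entryLinearMap F F 0 1,
      entryLinearMap F F 1 1] h
  have hB00 : B 0 0 = B 0 2 := sub_eq_zero.mp (hB 0)
  have hB01 : B 0 1 = 0 := hB 1
  have hB11 : B 1 1 = 0 := hB 2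
  have hs := (hsymm B hBL).apply
  obtain ⟨h₁, h₂⟩ := det_add_smul_diagonal_coeffs_eq_zero hsymm hsing hD hBL
  have hB22 : B 2 2 = 0 := by simpa [ha, hb] using h₂
  have hdet := hsing B hBL
  rw [det_fin_three, hs 0 1, hs 0 2, hs 1 2, hB00, hB01, hB11, hB22] at hdet
  rw [hB00, hB11, hB22] at h₁
  have hx : B 0 2 = 0 := by
    have : b * B 0 2 ^ 3 = 0 := by linear_combination a * hdet - B 0 2 * h₁
    simpa [hb] using this
  have hy : B 1 2 = 0 := by
    have : a * B 1 2 ^ 2 = 0 := by linear_combination -h₁ - b * B 0 2 * hx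
    simpa [ha] using this
  exact hB0 <| by
    ext i j
    fin_cases i <;> fin_cases j <;> simp [hB00, hB01, hB11, hB22, hx, hy, hs 0 1, hs 0 2, hs 1 2]

theorem finrank_map_submatrix_succ_le_one (hsymm : ∀ A ∈ L, A.IsSymm)
    (hminor : ∀ B ∈ L, B 1 1 * B 2 2 = B 1 2 ^ 2) :
    finrank F (L.map (submatrixLinearMap F Fin.succ Fin.succ)) ≤ 1 := by
  refine finrank_le_one_of_isSymm_of_det_eq_zero _ ?_ ?_ <;> rintro _ ⟨B, hB, rfl⟩
  · exact (hsymm B hB).submatrix _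
  · simpa [det_fin_two, (hsymm B hB).apply 1 2, sub_eq_zero, sq] using hminor B hB

theorem first_row_matrix_mem (hsymm : ∀ A ∈ L, A.IsSymm)
    (hminor : ∀ B ∈ L, B 1 1 * B 2 2 = B 1 2 ^ 2) (h : 3 < finrank F L) (v : Fin 3 → F) :
    !![v 0, v 1, v 2; v 1, 0, 0; v 2, 0, 0] ∈ L := by
  have hK := L.finrank_inf_ker_add_finrank_map (submatrixLinearMap F Fin.succ Fin.succ)
  have := finrank_map_submatrix_succ_le_one hsymm hminor
  set K := L ⊓ LinearMap.ker (submatrixLinearMap F Fin.succ Fin.succ)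
  let f : K →ₗ[F] Fin 3 → F := (LinearMap.pi
    ![entryLinearMap F F 0 0, entryLinearMap F F 0 1, entryLinearMap F F 0 2]).domRestrict K
  have hf : ∀ X : K, (X : Matrix (Fin 3) (Fin 3) F) =
      !![f X 0, f X 1, f X 2; f X 1, 0, 0; f X 2, 0, 0] := by
    rintro ⟨X, hXL, hXK⟩
    simp only [SetLike.mem_coe, LinearMap.mem_ker, submatrixLinearMap_apply, ← ext_iff,
      submatrix_apply, Matrix.zero_apply, Fin.forall_fin_two, Fin.succ_zero_eq_one,
      Fin.succ_one_eq_two] at hXK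
    have hs := (hsymm X hXL).apply
    ext i j
    fin_cases i <;> fin_cases j <;> simp [f, hXK, hs 0 1, hs 0 2]
  have hf_inj : Function.Injective f := fun X Y hXY => Subtype.ext <| by rw [hf X, hf Y, hXY]
  have hf_surj : Function.Surjective f := by
    refine (LinearMap.injective_iff_surjective_of_finrank_eq_finrank ?_).mp hf_inj
    have := LinearMap.finrank_le_finrank_of_injective hf_inj
    simp only [finrank_fin_fun] at this ⊢
    omega
  obtain ⟨X, rfl⟩ := hf_surj v
  exact hf X ▸ X.2.1

theorem finrank_le_three_of_diagonal_mem_of_eq_zero (hsymm : ∀ A ∈ L, A.IsSymm)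
    (hsing : ∀ A ∈ L, A.det = 0) {a : F} (ha : a ≠ 0) (hD : diagonal ![a, 0, 0] ∈ L) :
    finrank F L ≤ 3 := by
  have hminor : ∀ B ∈ L, B 1 1 * B 2 2 = B 1 2 ^ 2 := fun B hB => by
    have := hsing _ (L.add_mem hB (L.smul_mem 1 hD))
    rw [det_add_smul_diagonal, hsing B hB, (hsymm B hB).apply 1 2] at this
    have : a * (B 1 1 * B 2 2 - B 1 2 ^ 2) = 0 := by linear_combination this
    simpa [ha, sub_eq_zero, sq] using this
  by_contra! h
  obtain ⟨B, hBL, hB0, hB⟩ := L.exists_mem_ne_zero_forall_apply_eq_zero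
    ![entryLinearMap F F 0 0, entryLinearMap F F 0 1, entryLinearMap F F 0 2] h
  have hB00 : B 0 0 = 0 := hB 0
  have hB01 : B 0 1 = 0 := hB 1
  have hB02 : B 0 2 = 0 := hB 2
  have hs := (hsymm B hBL).apply
  have hdet (q r : F) : det (B + !![0, q, r; q, 0, 0; r, 0, 0]) =
      -(B 2 2 * q ^ 2 - 2 * B 1 2 * q * r + B 1 1 * r ^ 2) := by
    simp only [det_fin_three, Matrix.add_apply, of_apply, cons_val', cons_val_zero, cons_val_one,
      cons_val, cons_val_fin_one, hB00, hB01, hB02, hs 0 1, hs 0 2, hs 1 2]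
    ring
  have hdet_zero (q r : F) :=
    hsing _ (L.add_mem hBL (first_row_matrix_mem hsymm hminor h ![0, q, r]))
  have h22 : B 2 2 = 0 := by simpa [hdet] using hdet_zero 1 0
  have h11 : B 1 1 = 0 := by simpa [hdet] using hdet_zero 0 1
  have h12 : B 1 2 = 0 := by simpa [h11, h22] using (hminor B hBL).symm
  exact hB0 <| by
    ext i j
    fin_cases i <;> fin_cases j <;> simp [hB00, hB01, hB02, h11, h12, h22, hs 0 1, hs 0 2, hs 1 2]

theorem finrank_le_three_of_diagonal_mem [Infinite F] (hsymm : ∀ A ∈ L, A.IsSymm)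
    (hsing : ∀ A ∈ L, A.det = 0) {a b : F} (ha : a ≠ 0) (hD : diagonal ![a, b, 0] ∈ L) :
    finrank F L ≤ 3 := by
  rcases eq_or_ne b 0 with rfl | hb
  · exact finrank_le_three_of_diagonal_mem_of_eq_zero hsymm hsing ha hD
  · exact finrank_le_three_of_diagonal_mem_of_ne_zero hsymm hsing ha hb hD

end

/-- Over an algebraically closed field `F`, every linear subspace of
the symmetric `3×3` matrices consisting entirely of singular matrices has dimension
at most `3`: the maximal linear subspaces contained in the secant variety of the
quadric Veronese surface in `PG(5,F)` are planes. -/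
theorem singular_symmetric_subspace_dim_le_three
    (F : Type) [Field F] [IsAlgClosed F]
    (L : Submodule F (Matrix (Fin 3) (Fin 3) F))
    (hsymm : ∀ A ∈ L, A.IsSymm)
    (hsing : ∀ A ∈ L, A.det = 0) :
    Module.finrank F L ≤ 3 := by
  by_contra! h
  obtain ⟨d, hd, hdL⟩ := exists_diagonal_mem hsymm h
  obtain ⟨k, hk⟩ : ∃ k, d k = 0 := by
    simpa [det_diagonal, Finset.prod_eq_zero_iff] using hsing _ hdL
  obtain ⟨σ, hσ0, hσ2⟩ := exists_perm_apply_ne_zero_apply_eq_zero hd hk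
  let e := reindexLinearEquiv F F σ.symm σ.symm
  have hD : diagonal ![d (σ 0), d (σ 1), 0] ∈ L.map e.toLinearMap := by
    refine ⟨_, hdL, ?_⟩
    ext i j; fin_cases i <;> fin_cases j <;> simp [e, hσ2]
  have := finrank_le_three_of_diagonal_mem
    (by rintro _ ⟨A, hA, rfl⟩; exact (hsymm A hA).reindex _)
    (by rintro _ ⟨A, hA, rfl⟩; simpa [e] using hsing A hA) hσ0 hD
  rw [LinearEquiv.finrank_map_eq] at this
  omega
end

section
/- Let F be a field and let v₁, v₂ ∈ F^3 be linearly independent row vectors. Consider the 3-dimensional subspace T = { A ∈ Sym(3,F) : vᵢ A vⱼᵀ = 0 for all i, j ∈ {1,2} } of Sym(3, F). Then the rank-one matrices in T are exactly the nonzero scalar multiples of wᵀw, where w ∈ F^3 is a nonzero (and unique up to scalar) column vector with v₁ w = v₂ w = 0. In particular, every element of T is singular and the tangent plane T meets the Veronese surface in exactly one point. -/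
/-! The common kernel of `v₁` and `v₂` is the line spanned by `w = v₁ ⨯₃ v₂`. For `A` in
the tangent plane, `A v₁` and `A v₂` lie in that kernel, so `A` maps the plane spanned by
`v₁, v₂` into a line and is singular. A symmetric rank-one matrix is `l • x xᵀ` with `l ≠ 0`,
and `v ⬝ A v = l (v ⬝ x)²` vanishing for `v = v₁, v₂` forces `x` to be a multiple of `w`. -/

open Matrix

namespace Matrix

variable {m n K : Type*} [Field K]

theorem rank_eq_zero_iff [Fintype n] {A : Matrix m n K} : A.rank = 0 ↔ A = 0 := by
  rw [rank, Submodule.finrank_eq_zero, range_mulVecLin, Submodule.span_eq_bot,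
    Set.forall_mem_range]
  exact ⟨fun h ↦ ext fun i j ↦ congr_fun (h j) i, fun h j ↦ by subst h; rfl⟩

theorem rank_vecMulVec_of_ne_zero [Fintype n] {x : m → K} {y : n → K} (hx : x ≠ 0)
    (hy : y ≠ 0) : (vecMulVec x y).rank = 1 := by
  obtain ⟨i, hi⟩ := Function.ne_iff.mp hx
  obtain ⟨j, hj⟩ := Function.ne_iff.mp hy
  have hxy : vecMulVec x y ≠ 0 := fun h ↦ mul_ne_zero hi hj congr($h i j)
  exact (rank_vecMulVec_le x y).antisymm
    (Nat.one_le_iff_ne_zero.mpr (rank_eq_zero_iff.not.mpr hxy))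

theorem exists_eq_vecMulVec_of_rank_eq_one [Fintype n] {A : Matrix m n K} (h : A.rank = 1) :
    ∃ x y, A = vecMulVec x y := by
  classical
  obtain ⟨⟨x, _⟩, -, hx⟩ := finrank_eq_one_iff'.mp h
  choose y hy using fun j ↦ hx ⟨A.col j, by
    rw [range_mulVecLin]; exact Submodule.subset_span (Set.mem_range_self j)⟩
  refine ⟨x, y, ext fun i j ↦ ?_⟩
  simpa [vecMulVec_apply, mul_comm] using congr_fun (congrArg Subtype.val (hy j)) i |>.symm

theorem exists_eq_smul_of_isSymm_vecMulVec {x y : n → K} (hx : x ≠ 0)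
    (h : (vecMulVec x y).IsSymm) : ∃ l : K, y = l • x := by
  obtain ⟨k, hk⟩ := Function.ne_iff.mp hx
  refine ⟨y k / x k, funext fun j ↦ ?_⟩
  have hjk : x k * y j = x j * y k := by simpa [vecMulVec_apply] using h.apply j k
  rw [Pi.smul_apply, smul_eq_mul, div_mul_eq_mul_div, eq_div_iff hk]
  linear_combination hjk

theorem IsSymm.exists_eq_smul_vecMulVec_self_of_rank_eq_one [Fintype n] {A : Matrix n n K}
    (hA : A.IsSymm) (h : A.rank = 1) :
    ∃ (l : K) (x : n → K), l ≠ 0 ∧ x ≠ 0 ∧ A = l • vecMulVec x x := by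
  obtain ⟨x, y, rfl⟩ := exists_eq_vecMulVec_of_rank_eq_one h
  have hxy : ¬(x = 0 ∨ y = 0) := by
    rw [← vecMulVec_eq_zero, ← rank_eq_zero_iff, h]
    exact one_ne_zero
  rw [not_or] at hxy
  obtain ⟨l, rfl⟩ := exists_eq_smul_of_isSymm_vecMulVec hxy.1 hA
  exact ⟨l, x, left_ne_zero_of_smul hxy.2, hxy.1, vecMulVec_smul l x x⟩

theorem dotProduct_smul_vecMulVec_self_mulVec [Fintype n] (l : K) (x v : n → K) :
    v ⬝ᵥ (l • vecMulVec x x) *ᵥ v = l * (v ⬝ᵥ x) ^ 2 := by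
  rw [smul_mulVec, vecMulVec_mulVec, dotProduct_smul, dotProduct_smul, dotProduct_comm x v]
  simp [sq]

end Matrix

theorem LinearMap.exists_ne_zero_map_eq_zero_of_map_pair_mem_span_singleton
    {K V W : Type*} [Field K] [AddCommGroup V] [Module K V] [AddCommGroup W] [Module K W]
    (f : V →ₗ[K] W) {u₁ u₂ : V} (hu : LinearIndependent K ![u₁, u₂]) {w : W} {α β : K}
    (h₁ : f u₁ = α • w) (h₂ : f u₂ = β • w) : ∃ v ≠ 0, f v = 0 := by
  by_cases hα : α = 0
  · exact ⟨u₁, hu.ne_zero 0, by rw [h₁, hα, zero_smul]⟩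
  refine ⟨β • u₁ + (-α) • u₂,
    fun h ↦ hα (neg_eq_zero.mp (LinearIndependent.pair_iff.mp hu _ _ h).2), ?_⟩
  rw [map_add, map_smul, map_smul, h₁, h₂, smul_smul, smul_smul, mul_comm, neg_mul,
    neg_smul, add_neg_cancel]

theorem eq_smul_cross_of_dotProduct_eq_zero {F : Type*} [Field F] {v₁ v₂ u : Fin 3 → F}
    (hind : LinearIndependent F ![v₁, v₂]) (h₁ : v₁ ⬝ᵥ u = 0) (h₂ : v₂ ⬝ᵥ u = 0) :
    ∃ c : F, u = c • v₁ ⨯₃ v₂ := by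
  have hw := crossProduct_ne_zero_iff_linearIndependent.mpr hind
  have hcross : v₁ ⨯₃ v₂ ⨯₃ u = 0 := by
    rw [cross_cross_eq_smul_sub_smul, h₁, h₂, zero_smul, zero_smul, sub_zero]
  have hdep := mt crossProduct_ne_zero_iff_linearIndependent.mpr (not_not.mpr hcross)
  simpa [LinearIndependent.pair_iff' hw, eq_comm] using hdep

/-- For linearly independent row vectors `v₁, v₂ ∈ F^3`, the rank-one
matrices of the tangent plane `T = {A ∈ Sym(3,F) : vᵢ A vⱼᵀ = 0}` are exactly the
nonzero scalar multiples of `wᵀw`, where `w` is the (up to scalar unique) nonzero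
column vector with `v₁ w = v₂ w = 0`; in particular every element of `T` is
singular, and `T` meets the Veronese surface in exactly one point. -/
theorem tangent_plane_rank_one_elements
    (F : Type) [Field F] (v₁ v₂ : Fin 3 → F)
    (hind : LinearIndependent F ![v₁, v₂]) :
    ∃ w : Fin 3 → F, w ≠ 0 ∧ v₁ ⬝ᵥ w = 0 ∧ v₂ ⬝ᵥ w = 0 ∧
      (∀ w' : Fin 3 → F, w' ≠ 0 → v₁ ⬝ᵥ w' = 0 → v₂ ⬝ᵥ w' = 0 →
        ∃ c : F, w' = c • w) ∧
      (∀ A : Matrix (Fin 3) (Fin 3) F, A.IsSymm →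
        (∀ i j : Fin 2, ![v₁, v₂] i ⬝ᵥ A *ᵥ ![v₁, v₂] j = 0) →
          A.det = 0 ∧
          (A.rank = 1 ↔ ∃ c : F, c ≠ 0 ∧ A = c • vecMulVec w w)) := by
  have hw := crossProduct_ne_zero_iff_linearIndependent.mpr hind
  have hperp {u : Fin 3 → F} := eq_smul_cross_of_dotProduct_eq_zero (u := u) hind
  refine ⟨v₁ ⨯₃ v₂, hw, dot_self_cross _ _, dot_cross_self _ _, fun _ _ ↦ hperp,
    fun A hA hT ↦ ?_⟩
  simp only [Fin.forall_fin_two, cons_val_zero, cons_val_one] at hT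
  obtain ⟨⟨h₁₁, h₁₂⟩, h₂₁, h₂₂⟩ := hT
  obtain ⟨α, hα⟩ := hperp h₁₁ h₂₁
  obtain ⟨β, hβ⟩ := hperp h₁₂ h₂₂
  refine ⟨exists_mulVec_eq_zero_iff.mp
    (A.mulVecLin.exists_ne_zero_map_eq_zero_of_map_pair_mem_span_singleton hind hα hβ), ?_, ?_⟩
  · intro hr
    obtain ⟨l, x, hl, hx, rfl⟩ := hA.exists_eq_smul_vecMulVec_self_of_rank_eq_one hr
    have hx_perp {v : Fin 3 → F} (hv : v ⬝ᵥ (l • vecMulVec x x) *ᵥ v = 0) :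
        v ⬝ᵥ x = 0 := by
      rw [dotProduct_smul_vecMulVec_self_mulVec] at hv
      exact pow_eq_zero_iff two_ne_zero |>.mp ((mul_eq_zero.mp hv).resolve_left hl)
    obtain ⟨μ, rfl⟩ := hperp (hx_perp h₁₁) (hx_perp h₂₂)
    refine ⟨l * μ ^ 2, mul_ne_zero hl (pow_ne_zero 2 (left_ne_zero_of_smul hx)), ?_⟩
    rw [smul_vecMulVec, vecMulVec_smul, smul_smul, smul_smul, sq, mul_assoc]
  · rintro ⟨c, hc, rfl⟩
    rw [rank_smul_of_mem_nonZeroDivisors _ (mem_nonZeroDivisors_of_ne_zero hc),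
      rank_vecMulVec_of_ne_zero hw hw]
end

section
/- Let F be a field of characteristic 2 and let A = (a_{ij}) ∈ Sym(3, F) be a symmetric 3×3 matrix. Then the three conditions a₂₂a₃₃ = a₂₃², a₁₁a₃₃ = a₁₃², a₁₁a₂₂ = a₁₂² hold simultaneously if and only if A has rank at most 1. Since in characteristic 2 these three quantities (a₂₂a₃₃ + a₂₃², a₁₁a₃₃ + a₁₄², a₁₁a₂₂ + a₁₂²) are exactly the nonzero partial derivatives of the determinant viewed as a polynomial in the six coordinates (a₁₁, a₂₂, a₃₃, a₁₂, a₁₃, a₂₃), this says that the singular points of the secant variety of the Veronese surface are exactly the points of the Veronese surface. -/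
/-- In a field of characteristic 2, squaring is injective. -/
lemma sq_cancel_char2 {F : Type} [Field F] [CharP F 2] {x y : F}
    (h : x ^ 2 = y ^ 2) : x = y := by
  have h2 : (2 : F) = 0 := by simpa using CharP.cast_eq_zero F 2
  have hxy : (x + y) ^ 2 = 0 := by linear_combination h + (y ^ 2 + x * y) * h2
  have h0 : x + y = 0 := pow_eq_zero_iff (n := 2) (by norm_num) |>.mp hxy
  linear_combination h0 - y * h2

/-- Case analysis for `Fin 3`. -/
lemma forall_fin3 {P : Fin 3 → Prop} (h0 : P 0) (h1 : P 1) (h2 : P 2) :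
    ∀ i, P i := by
  intro i; fin_cases i <;> assumption

/-- A 3x3 matrix factored through a 3x1 times 1x3 product has rank at most 1. -/
lemma rank_le_one_of_factor {F : Type} [Field F] (A : Matrix (Fin 3) (Fin 3) F)
    (B : Matrix (Fin 3) (Fin 1) F) (C : Matrix (Fin 1) (Fin 3) F)
    (h : ∀ i j, A i j = B i 0 * C 0 j) : A.rank ≤ 1 := by
  have hA : A = B * C := by
    ext i j
    rw [Matrix.mul_apply, Fin.sum_univ_one]
    exact h i j
  calc A.rank = (B * C).rank := by rw [hA]
    _ ≤ B.rank := Matrix.rank_mul_le_left B C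
    _ ≤ Fintype.card (Fin 1) := B.rank_le_card_width
    _ = 1 := by simp

/-- Rank at most one when there is a pivot `p` with `A p p ≠ 0` and all the
"pivot minors" vanish. -/
lemma rank_le_one_of_pivot {F : Type} [Field F] (A : Matrix (Fin 3) (Fin 3) F)
    (p : Fin 3) (hp : A p p ≠ 0)
    (h : ∀ i j, A i j * A p p = A i p * A p j) : A.rank ≤ 1 := by
  refine rank_le_one_of_factor A
    (Matrix.of fun i _ => A i p) (Matrix.of fun _ j => A p j * (A p p)⁻¹) ?_
  intro i j
  simp only [Matrix.of_apply]
  field_simp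
  linear_combination h i j

/-- In characteristic `2`, a symmetric `3×3` matrix `A` satisfies
`a₂₂a₃₃ = a₂₃²`, `a₁₁a₃₃ = a₁₃²` and `a₁₁a₂₂ = a₁₂²` (the vanishing of the partial
derivatives of the determinant) if and only if `A` has rank at most `1`: the
singular points of the secant variety of the Veronese surface are exactly the
points of the Veronese surface. -/
theorem singular_points_of_secant_variety
    (F : Type) [Field F] [CharP F 2]
    (A : Matrix (Fin 3) (Fin 3) F) (hA : A.IsSymm) :
    (A 1 1 * A 2 2 = (A 1 2) ^ 2 ∧
     A 0 0 * A 2 2 = (A 0 2) ^ 2 ∧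
     A 0 0 * A 1 1 = (A 0 1) ^ 2) ↔ A.rank ≤ 1 := by
  have s01 : A 1 0 = A 0 1 := hA.apply 0 1
  have s02 : A 2 0 = A 0 2 := hA.apply 0 2
  have s12 : A 2 1 = A 1 2 := hA.apply 1 2
  constructor
  · rintro ⟨h1, h2, h3⟩
    by_cases h00 : A 0 0 ≠ 0
    · have key : A 1 2 * A 0 0 = A 0 1 * A 0 2 := by
        apply sq_cancel_char2
        linear_combination (-(A 0 0)^2) * h1 + (A 0 0 * A 1 1) * h2 + (A 0 2)^2 * h3
      refine rank_le_one_of_pivot A 0 h00 ?_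
      refine forall_fin3 ?_ ?_ ?_ <;> refine forall_fin3 ?_ ?_ ?_
      · ring
      · ring
      · ring
      · ring
      · linear_combination h3 - A 0 1 * s01
      · linear_combination key - A 0 2 * s01
      · ring
      · linear_combination A 0 0 * s12 + key - A 0 1 * s02
      · linear_combination h2 - A 0 2 * s02
    · push_neg at h00
      by_cases h11 : A 1 1 ≠ 0
      · have key : A 0 2 * A 1 1 = A 0 1 * A 1 2 := by
          apply sq_cancel_char2
          linear_combination (A 0 0 * A 1 1) * h1 - (A 1 1)^2 * h2 + (A 1 2)^2 * h3
        refine rank_le_one_of_pivot A 1 h11 ?_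
        refine forall_fin3 ?_ ?_ ?_ <;> refine forall_fin3 ?_ ?_ ?_
        · linear_combination h3 - A 0 1 * s01
        · ring
        · linear_combination key
        · ring
        · ring
        · ring
        · linear_combination A 1 1 * s02 + key - A 1 2 * s01 - A 1 0 * s12
        · ring
        · linear_combination h1 - A 1 2 * s12
      · push_neg at h11
        by_cases h22 : A 2 2 ≠ 0
        · have key : A 0 1 * A 2 2 = A 0 2 * A 1 2 := by
            apply sq_cancel_char2
            linear_combination (A 0 0 * A 2 2) * h1 + (A 1 2)^2 * h2 - (A 2 2)^2 * h3
          refine rank_le_one_of_pivot A 2 h22 ?_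
          refine forall_fin3 ?_ ?_ ?_ <;> refine forall_fin3 ?_ ?_ ?_
          · linear_combination h2 - A 0 2 * s02
          · linear_combination key - A 0 2 * s12
          · ring
          · linear_combination A 2 2 * s01 + key - A 1 2 * s02
          · linear_combination h1 - A 1 2 * s12
          · ring
          · ring
          · ring
          · ring
        · push_neg at h22
          have e01 : A 0 1 = 0 := by
            have : A 0 1 ^ 2 = 0 ^ 2 := by rw [← h3, h00]; ring
            simpa using sq_cancel_char2 this
          have e02 : A 0 2 = 0 := by
            have : A 0 2 ^ 2 = 0 ^ 2 := by rw [← h2, h00]; ring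
            simpa using sq_cancel_char2 this
          have e12 : A 1 2 = 0 := by
            have : A 1 2 ^ 2 = 0 ^ 2 := by rw [← h1, h11]; ring
            simpa using sq_cancel_char2 this
          have hz : A = 0 := by
            ext i j
            fin_cases i <;> fin_cases j <;> simp_all
          rw [hz, Matrix.rank_zero]
          norm_num
  · intro hr
    have hfin : Module.finrank F (LinearMap.range A.mulVecLin) ≤ 1 := hr
    obtain ⟨v, hv⟩ := finrank_le_one_iff.mp hfin
    have hcol : ∀ k : Fin 3, ∃ c : F, ∀ i, c * (v : Fin 3 → F) i = A i k := by
      intro k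
      have hmem : A.mulVec (Pi.single k 1) ∈ LinearMap.range A.mulVecLin :=
        ⟨Pi.single k 1, rfl⟩
      obtain ⟨c, hc⟩ := hv ⟨_, hmem⟩
      refine ⟨c, fun i => ?_⟩
      have := congrFun (congrArg Subtype.val hc) i
      simpa [Matrix.mulVec_single] using this
    obtain ⟨c0, hc0⟩ := hcol 0
    obtain ⟨c1, hc1⟩ := hcol 1
    obtain ⟨c2, hc2⟩ := hcol 2
    refine ⟨?_, ?_, ?_⟩
    · rw [← hc1 1, ← hc2 2, pow_two]
      nth_rewrite 1 [← hc2 1]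
      rw [← s12, ← hc1 2]
      ring
    · rw [← hc0 0, ← hc2 2, pow_two]
      nth_rewrite 1 [← hc2 0]
      rw [← s02, ← hc0 2]
      ring
    · rw [← hc0 0, ← hc1 1, pow_two]
      nth_rewrite 1 [← hc1 0]
      rw [← s01, ← hc0 1]
      ring
end
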